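/- arXiv:2209.01116 — 6 statements merged into one kernel-verified Lean document; each statement's English description precedes it below -/
import Mathlib

section
/- For every η > 0 there is γ > 0 such that for all n the following holds. Let G be an n-vertex graph with δ(G) ≥ (1/2 - γ)·n and α(G) < (1/2 - η)·n, and let c : V(G) → ℝ_{≥0} be a weight function such that c(u) + c(v) ≥ 1 for every edge uv of G. Then ∑_{v ∈ V(G)} c(v) ≥ n/2. -/
/-!
Let `v₀` be a vertex of minimum weight `m < 1/2`. Its neighbours carry weight at least `1 - m`,
the vertices of weight below `1/2` form an independent set `S` of weight at least `m` each, and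
all remaining vertices carry at least `1/2`. Summing, the total weight is at least
`n/2 + (1/2 - m)(deg v₀ - |S|)`, and `deg v₀ ≥ (1/2 - η)n > |S|` once `γ ≤ η`.
-/

open Finset

namespace SimpleGraph

variable {V : Type*} (G : SimpleGraph V) {c : V → ℝ}

theorem not_adj_of_lt_half (hc : ∀ u v, G.Adj u v → 1 ≤ c u + c v) {a b : V}
    (ha : c a < 1 / 2) (hb : c b < 1 / 2) : ¬ G.Adj a b :=
  fun h => by linarith [hc a b h]

theorem half_add_le_of_forall_le [DecidableRel G.Adj] (hc : ∀ u v, G.Adj u v → 1 ≤ c u + c v)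
    {v₀ : V} (hmin : ∀ v, c v₀ ≤ c v) (v : V) :
    1 / 2 + (1 / 2 - c v₀) *
      ((if G.Adj v₀ v then 1 else 0) - (if c v < 1 / 2 then 1 else 0)) ≤ c v := by
  have hv := hmin v
  split_ifs with hadj <;> first | linarith | linarith [hc v₀ v hadj]

theorem card_div_two_add_le_sum [Fintype V] [DecidableRel G.Adj]
    (hc : ∀ u v, G.Adj u v → 1 ≤ c u + c v) {v₀ : V} (hmin : ∀ v, c v₀ ≤ c v) :
    (Fintype.card V : ℝ) / 2 + (1 / 2 - c v₀) * (G.degree v₀ - #{v | c v < 1 / 2}) ≤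
      ∑ v, c v := by
  calc (Fintype.card V : ℝ) / 2 + (1 / 2 - c v₀) * (G.degree v₀ - #{v | c v < 1 / 2})
      = ∑ v, (1 / 2 + (1 / 2 - c v₀) *
          ((if G.Adj v₀ v then 1 else 0) - (if c v < 1 / 2 then 1 else 0))) := by
        simp only [sum_add_distrib, ← mul_sum, sum_sub_distrib, sum_boole, sum_const, card_univ,
          ← card_neighborFinset_eq_degree, neighborFinset_eq_filter, nsmul_eq_mul]
        ring
    _ ≤ ∑ v, c v := sum_le_sum fun v _ => G.half_add_le_of_forall_le hc hmin v

end SimpleGraph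

/-- Base case `k = 2` of the fractional covering claim: for every `η > 0` there is
`γ > 0` such that in any `n`-vertex graph with minimum degree at least `(1/2-γ)n`
and independence number less than `(1/2-η)n`, any nonnegative vertex weighting
with `c(u)+c(v) ≥ 1` on every edge has total weight at least `n/2`. -/
theorem fractional_cover_k_two {η : ℝ} (hη : 0 < η) :
    ∃ γ : ℝ, 0 < γ ∧
      ∀ (n : ℕ) (V : Type) [Fintype V] [DecidableEq V]
        (G : SimpleGraph V) [DecidableRel G.Adj],
        Fintype.card V = n →
        (∀ v : V, (1 / 2 - γ) * n ≤ (G.degree v : ℝ)) →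
        (∀ I : Finset V, (∀ a ∈ I, ∀ b ∈ I, ¬ G.Adj a b) →
          (I.card : ℝ) < (1 / 2 - η) * n) →
        ∀ c : V → ℝ, (∀ v, 0 ≤ c v) →
          (∀ u v : V, G.Adj u v → 1 ≤ c u + c v) →
          (n : ℝ) / 2 ≤ ∑ v, c v := by
  refine ⟨η, hη, ?_⟩
  rintro n V _ _ G _ rfl hdeg hindep c - hc
  by_cases hlight : ∃ w, c w < 1 / 2
  · obtain ⟨w, hw⟩ := hlight
    obtain ⟨v₀, -, hmin⟩ := exists_min_image univ c ⟨w, mem_univ w⟩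
    have hS : (#{v | c v < 1 / 2} : ℝ) < G.degree v₀ :=
      (hindep _ fun a ha b hb => G.not_adj_of_lt_half hc (mem_filter.1 ha).2
        (mem_filter.1 hb).2).trans_le (hdeg v₀)
    have hm : c v₀ < 1 / 2 := (hmin w (mem_univ w)).trans_lt hw
    have hsum := G.card_div_two_add_le_sum hc fun v => hmin v (mem_univ v)
    linarith [mul_pos (sub_pos.2 hm) (sub_pos.2 hS)]
  · push Not at hlight
    calc (Fintype.card V : ℝ) / 2 = ∑ _v : V, (1 / 2 : ℝ) := by simp [div_eq_mul_inv]
      _ ≤ ∑ v, c v := sum_le_sum fun v _ => hlight v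
end

section
/- Let k ≥ 3 and γ with 0 < γ < 1/(2(k-1)^2). Let G be an n-vertex graph with δ(G) ≥ ((k-1)/k - γ)·n and α(G) < (1/k - (k-1)·γ)·n. Then any two distinct vertices u, v of G have a copy of K_{k-1} in their common neighbourhood; in particular u and v each extend this clique to a k-clique of G. -/
open Finset

/-!
A vertex outside the common neighbourhood `N(T)` of a vertex set `T` is a non-neighbour of some
`t ∈ T`, so `|N(T)| ≥ n - |T| (n - δ(G)) ≥ n - |T| (1/k + γ) n`. For `|T| ≤ k - 1` this is at least
`(1/k - (k-1)γ) n > α(G)`, so `N(T)` contains an edge. Starting from `T = {u, v}`, greedily add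
`k - 3` vertices of the current common neighbourhood (they form a clique), then close off with an
edge of the last common neighbourhood.
-/

namespace SimpleGraph

variable {V : Type*} [Fintype V] [DecidableEq V] (G : SimpleGraph V) [DecidableRel G.Adj]

def commonNeighborFinset (T : Finset V) : Finset V := {x | ∀ t ∈ T, G.Adj t x}

variable {G}

@[simp]
theorem mem_commonNeighborFinset {T : Finset V} {x : V} :
    x ∈ G.commonNeighborFinset T ↔ ∀ t ∈ T, G.Adj t x := by
  simp [commonNeighborFinset]

theorem commonNeighborFinset_union (S T : Finset V) :
    G.commonNeighborFinset (S ∪ T) = G.commonNeighborFinset S ∩ G.commonNeighborFinset T := by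
  ext x
  simp only [mem_commonNeighborFinset, mem_union, mem_inter, or_imp, forall_and]

theorem card_le_card_commonNeighborFinset_add_sum (T : Finset V) :
    Fintype.card V ≤
      #(G.commonNeighborFinset T) + ∑ t ∈ T, (Fintype.card V - G.degree t) := by
  have hcompl : (G.commonNeighborFinset T)ᶜ ⊆ T.biUnion fun t => (G.neighborFinset t)ᶜ := by
    intro x hx
    simpa using hx
  calc Fintype.card V
      = #(G.commonNeighborFinset T) + #(G.commonNeighborFinset T)ᶜ :=
        (card_add_card_compl _).symm
    _ ≤ #(G.commonNeighborFinset T) + ∑ t ∈ T, #(G.neighborFinset t)ᶜ :=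
        Nat.add_le_add_left ((card_le_card hcompl).trans card_biUnion_le) _
    _ = #(G.commonNeighborFinset T) + ∑ t ∈ T, (Fintype.card V - G.degree t) := by
        simp only [card_compl, card_neighborFinset_eq_degree]

theorem sub_card_mul_sub_le_card_commonNeighborFinset {d : ℝ} (hd : ∀ v, d ≤ G.degree v)
    (T : Finset V) :
    (Fintype.card V : ℝ) - #T * (Fintype.card V - d) ≤ #(G.commonNeighborFinset T) := by
  have hsum : ∑ t ∈ T, ((Fintype.card V - G.degree t : ℕ) : ℝ) ≤ #T * (Fintype.card V - d) := by
    rw [← nsmul_eq_mul]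
    refine sum_le_card_nsmul _ _ _ fun t _ => ?_
    rw [Nat.cast_sub (G.degree_lt_card_verts t).le]
    linarith [hd t]
  have hcard : (Fintype.card V : ℝ) ≤
      #(G.commonNeighborFinset T) + ∑ t ∈ T, ((Fintype.card V - G.degree t : ℕ) : ℝ) := by
    exact_mod_cast G.card_le_card_commonNeighborFinset_add_sum T
  linarith

theorem IsNClique.insert_of_mem_commonNeighborFinset {S c : Finset V} {j : ℕ} {x : V}
    (hcS : c ⊆ G.commonNeighborFinset S) (hc : G.IsNClique j c)
    (hx : x ∈ G.commonNeighborFinset (S ∪ c)) :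
    insert x c ⊆ G.commonNeighborFinset S ∧ G.IsNClique (j + 1) (insert x c) := by
  rw [commonNeighborFinset_union, mem_inter] at hx
  refine ⟨insert_subset hx.1 hcS, hc.insert fun b hb => ?_⟩
  exact (mem_commonNeighborFinset.1 hx.2 b hb).symm

theorem exists_isNClique_of_forall_nonempty {S : Finset V} {j : ℕ}
    (h : ∀ c ⊆ G.commonNeighborFinset S, #c < j → (G.commonNeighborFinset (S ∪ c)).Nonempty) :
    ∃ c ⊆ G.commonNeighborFinset S, G.IsNClique j c := by
  induction j with
  | zero => exact ⟨∅, empty_subset _, by simp⟩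
  | succ j ih =>
    obtain ⟨c, hcS, hc⟩ := ih fun c hcS hcj => h c hcS (Nat.lt_succ_of_lt hcj)
    obtain ⟨x, hx⟩ := h c hcS (hc.card_eq.trans_lt j.lt_succ_self)
    exact ⟨insert x c, hc.insert_of_mem_commonNeighborFinset hcS hx⟩

theorem exists_isNClique_add_two {S : Finset V} {j : ℕ}
    (h : ∀ c ⊆ G.commonNeighborFinset S, #c ≤ j →
      ∃ a ∈ G.commonNeighborFinset (S ∪ c), ∃ b ∈ G.commonNeighborFinset (S ∪ c), G.Adj a b) :
    ∃ c ⊆ G.commonNeighborFinset S, G.IsNClique (j + 2) c := by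
  obtain ⟨c, hcS, hc⟩ := exists_isNClique_of_forall_nonempty fun c hcS hcj =>
    let ⟨a, ha, _⟩ := h c hcS hcj.le
    ⟨a, ha⟩
  obtain ⟨a, ha, b, hb, hab⟩ := h c hcS hc.card_eq.le
  obtain ⟨hbS, hbc⟩ := hc.insert_of_mem_commonNeighborFinset hcS hb
  have ha' : a ∈ G.commonNeighborFinset (S ∪ insert b c) := by
    simp only [mem_commonNeighborFinset, mem_union, mem_insert] at ha ⊢
    rintro t (ht | rfl | ht)
    exacts [ha t (.inl ht), hab.symm, ha t (.inr ht)]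
  exact ⟨insert a (insert b c), hbc.insert_of_mem_commonNeighborFinset hbS ha'⟩

end SimpleGraph

open SimpleGraph

theorem common_nbhd_contains_clique_general
    {k n : ℕ} (hk : 3 ≤ k) {γ : ℝ}
    {V : Type*} [Fintype V] [DecidableEq V]
    (G : SimpleGraph V) [DecidableRel G.Adj] (hcard : Fintype.card V = n)
    (hmin : ∀ v : V, (((k : ℝ) - 1) / (k : ℝ) - γ) * n ≤ (G.degree v : ℝ))
    (hα : ∀ I : Finset V, (∀ a ∈ I, ∀ b ∈ I, ¬ G.Adj a b) →
      (I.card : ℝ) < (1 / (k : ℝ) - ((k : ℝ) - 1) * γ) * n)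
    (u v : V) :
    ∃ s : Finset V, (∀ w ∈ s, G.Adj u w ∧ G.Adj v w) ∧
      G.IsNClique (k - 1) s ∧
      G.IsNClique k (insert u s) ∧ G.IsNClique k (insert v s) := by
  subst hcard
  have hdeg : (((k : ℝ) - 1) / k - γ) * Fintype.card V ≤ Fintype.card V :=
    (hmin u).trans (by exact_mod_cast (G.degree_lt_card_verts u).le)
  have hlarge (T : Finset V) (hT : #T ≤ k - 1) :
      (1 / (k : ℝ) - (k - 1) * γ) * Fintype.card V ≤ #(G.commonNeighborFinset T) := by
    have hTk : (#T : ℝ) ≤ k - 1 := by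
      rw [← Nat.cast_one, ← Nat.cast_sub (by omega)]; exact_mod_cast hT
    have hk0 : (k : ℝ) ≠ 0 := by positivity
    have hid : (Fintype.card V : ℝ) -
          (k - 1) * (Fintype.card V - ((k - 1) / k - γ) * Fintype.card V) =
        (1 / k - (k - 1) * γ) * Fintype.card V := by
      field_simp; ring
    have := mul_le_mul_of_nonneg_right hTk (sub_nonneg.2 hdeg)
    linarith [sub_card_mul_sub_le_card_commonNeighborFinset hmin T]
  have hedge (T : Finset V) (hT : #T ≤ k - 1) : ∃ a ∈ G.commonNeighborFinset T,
      ∃ b ∈ G.commonNeighborFinset T, G.Adj a b := by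
    by_contra! hind
    exact (hα _ hind).not_ge (hlarge T hT)
  obtain ⟨s, hsuv, hs⟩ := exists_isNClique_add_two (S := {u, v}) (j := k - 3) fun c _ hc =>
    hedge _ ((card_union_le _ _).trans (by have := card_le_two (a := u) (b := v); omega))
  rw [show k - 3 + 2 = k - 1 by omega] at hs
  have hcommon (w : V) (hw : w ∈ s) : G.Adj u w ∧ G.Adj v w := by simpa using hsuv hw
  have hk1 : k - 1 + 1 = k := by omega
  exact ⟨s, hcommon, hs, hk1 ▸ hs.insert fun w hw => (hcommon w hw).1,
    hk1 ▸ hs.insert fun w hw => (hcommon w hw).2⟩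

/-- Under the stability hypotheses, any two distinct vertices have a copy of
`K_{k-1}` in their common neighbourhood; in particular each of them extends it
to a `k`-clique. -/
theorem common_nbhd_contains_clique
    {k n : ℕ} (hk : 3 ≤ k) {γ : ℝ} (hγ0 : 0 < γ)
    (hγ1 : γ < 1 / (2 * ((k : ℝ) - 1) ^ 2))
    {V : Type*} [Fintype V] [DecidableEq V]
    (G : SimpleGraph V) [DecidableRel G.Adj] (hcard : Fintype.card V = n)
    (hmin : ∀ v : V, (((k : ℝ) - 1) / (k : ℝ) - γ) * n ≤ (G.degree v : ℝ))
    (hα : ∀ I : Finset V, (∀ a ∈ I, ∀ b ∈ I, ¬ G.Adj a b) →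
      (I.card : ℝ) < (1 / (k : ℝ) - ((k : ℝ) - 1) * γ) * n)
    (u v : V) (huv : u ≠ v) :
    ∃ s : Finset V, (∀ w ∈ s, G.Adj u w ∧ G.Adj v w) ∧
      G.IsNClique (k - 1) s ∧
      G.IsNClique k (insert u s) ∧ G.IsNClique k (insert v s) :=
  common_nbhd_contains_clique_general hk G hcard hmin hα u v
end

section
/- Let 0 < ε < d_{12}, d_{13}, d_{23} ≤ 1 and let Γ be a tripartite graph with parts V¹, V², V³ of size n such that (Vⁱ, Vʲ) is ε-regular with density d_{ij} for all 1 ≤ i < j ≤ 3. Then for all X_i ⊆ Vⁱ with |X_i| ≥ εn (i = 1,2,3), the number of triangles of Γ with one vertex in each X_i equals d_{12}·d_{13}·d_{23}·|X₁||X₂||X₃| up to an additive error of at most 10εn³. -/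
/-!
Count triangles through their first vertex: the triangles at `x ∈ X₁` are the edges between
the neighbourhoods `N₂(x) ⊆ X₂` and `N₃(x) ⊆ X₃`. Regularity of `(V², V³)` makes each such
count `d₂₃ |N₂(x)| |N₃(x)|` up to `εn²`, and regularity of `(V¹, V²)`, `(V¹, V³)` forces all but
`4εn` vertices `x` to have `|N₂(x)| ≈ d₁₂ |X₂|` and `|N₃(x)| ≈ d₁₃ |X₃|`. Summing over `x`
gives an error of at most `εn³ + 2εn³ + 4εn³`.
-/

open Finset

/-- The number of edges between two disjoint vertex sets. -/
def edgeCount {V : Type*} [DecidableEq V] (G : SimpleGraph V) [DecidableRel G.Adj]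
    (X Y : Finset V) : ℕ :=
  ∑ x ∈ X, (Y.filter (G.Adj x)).card

/-- The edge density between two disjoint vertex sets. -/
noncomputable def density {V : Type*} [DecidableEq V] (G : SimpleGraph V)
    [DecidableRel G.Adj] (X Y : Finset V) : ℝ :=
  (edgeCount G X Y : ℝ) / ((X.card : ℝ) * (Y.card : ℝ))

/-- `(A,B)` is an `ε`-regular pair of density `d`. -/
def IsRegularPair {V : Type*} [DecidableEq V] (G : SimpleGraph V) [DecidableRel G.Adj]
    (ε d : ℝ) (A B : Finset V) : Prop :=
  density G A B = d ∧
    ∀ X ⊆ A, ∀ Y ⊆ B,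
      ε * (A.card : ℝ) ≤ (X.card : ℝ) → ε * (B.card : ℝ) ≤ (Y.card : ℝ) →
      |density G X Y - d| < ε

lemma abs_mul_sub_mul_le {a b a' b' p q ε : ℝ} (ha : |a - a'| ≤ ε * p) (hb : |b - b'| ≤ ε * q)
    (hbq : |b| ≤ q) (ha'p : |a'| ≤ p) : |a * b - a' * b'| ≤ 2 * ε * (p * q) := by
  have hεp : 0 ≤ ε * p := (abs_nonneg _).trans ha
  calc |a * b - a' * b'| = |(a - a') * b + a' * (b - b')| := by ring_nf
    _ ≤ |a - a'| * |b| + |a'| * |b - b'| := by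
      rw [← abs_mul, ← abs_mul]; exact abs_add_le _ _
    _ ≤ ε * p * q + p * (ε * q) :=
      add_le_add (mul_le_mul ha hbq (abs_nonneg _) hεp)
        (mul_le_mul ha'p hb (abs_nonneg _) ((abs_nonneg _).trans ha'p))
    _ = 2 * ε * (p * q) := by ring

section
variable {V : Type*} [DecidableEq V] (G : SimpleGraph V) [DecidableRel G.Adj]

lemma cast_edgeCount (X Y : Finset V) :
    (edgeCount G X Y : ℝ) = ∑ x ∈ X, (#(Y.filter (G.Adj x)) : ℝ) := by
  simp [edgeCount]

lemma edgeCount_le_card_mul_card (X Y : Finset V) : edgeCount G X Y ≤ #X * #Y :=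
  calc edgeCount G X Y ≤ ∑ _x ∈ X, #Y := sum_le_sum fun _ _ => card_filter_le _ _
    _ = #X * #Y := by rw [sum_const, smul_eq_mul]

lemma density_mul_card_mul_card (X Y : Finset V) :
    density G X Y * (#X * #Y) = edgeCount G X Y := by
  rcases eq_or_ne ((#X : ℝ) * #Y) 0 with h | h
  · have hXY : #X * #Y = 0 := by exact_mod_cast h
    have he : edgeCount G X Y = 0 := Nat.le_zero.mp (hXY ▸ edgeCount_le_card_mul_card G X Y)
    simp [h, he]
  · exact div_mul_cancel₀ _ h

lemma density_nonneg (X Y : Finset V) : 0 ≤ density G X Y := by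
  unfold density
  positivity

lemma density_le_one (X Y : Finset V) : density G X Y ≤ 1 :=
  div_le_one_of_le₀ (by exact_mod_cast edgeCount_le_card_mul_card G X Y) (by positivity)

lemma abs_edgeCount_sub_le_card_mul_card {d : ℝ} (hd₀ : 0 ≤ d) (hd₁ : d ≤ 1) (X Y : Finset V) :
    |(edgeCount G X Y : ℝ) - d * (#X * #Y)| ≤ #X * #Y :=
  abs_sub_le_of_nonneg_of_le (by positivity)
    (by exact_mod_cast edgeCount_le_card_mul_card G X Y) (by positivity)
    (mul_le_of_le_one_left (by positivity) hd₁)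

lemma card_triangles_eq_sum_edgeCount (X₁ X₂ X₃ : Finset V) :
    #((X₁ ×ˢ X₂ ×ˢ X₃).filter
        (fun p => G.Adj p.1 p.2.1 ∧ G.Adj p.1 p.2.2 ∧ G.Adj p.2.1 p.2.2))
      = ∑ x ∈ X₁, edgeCount G (X₂.filter (G.Adj x)) (X₃.filter (G.Adj x)) := by
  simp only [card_filter, sum_product, edgeCount, sum_filter]
  refine sum_congr rfl fun x₁ _ => sum_congr rfl fun x₂ _ => ?_
  by_cases h : G.Adj x₁ x₂ <;> simp [h, ite_and]

end

section
variable {V : Type*} (G : SimpleGraph V) [DecidableRel G.Adj]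

noncomputable def atypicalVertices (ε d : ℝ) (X Y : Finset V) : Finset V :=
  X.filter fun x => ¬ |(#(Y.filter (G.Adj x)) : ℝ) - d * #Y| < ε * #Y

lemma atypicalVertices_subset (ε d : ℝ) (X Y : Finset V) : atypicalVertices G ε d X Y ⊆ X :=
  filter_subset _ _

lemma abs_degree_mul_degree_sub_le {ε d₁ d₂ : ℝ} (hd₁ : 0 ≤ d₁) (hd₁_le : d₁ ≤ 1)
    {X Y Z : Finset V} {x : V} (hx : x ∈ X) (hxY : x ∉ atypicalVertices G ε d₁ X Y)
    (hxZ : x ∉ atypicalVertices G ε d₂ X Z) :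
    |(#(Y.filter (G.Adj x)) : ℝ) * #(Z.filter (G.Adj x)) - d₁ * d₂ * (#Y * #Z)|
      ≤ 2 * ε * (#Y * #Z) := by
  simp only [atypicalVertices, mem_filter, hx, true_and, not_not] at hxY hxZ
  have hZx : |(#(Z.filter (G.Adj x)) : ℝ)| ≤ #Z := by
    rw [abs_of_nonneg (by positivity)]
    exact_mod_cast card_le_card (filter_subset _ _)
  have hdY : |d₁ * #Y| ≤ #Y := by
    rw [abs_of_nonneg (by positivity)]
    exact mul_le_of_le_one_left (by positivity) hd₁_le
  have key := abs_mul_sub_mul_le hxY.le hxZ.le hZx hdY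
  rwa [show d₁ * #Y * (d₂ * #Z) = d₁ * d₂ * ((#Y : ℝ) * #Z) by ring] at key

end

namespace IsRegularPair

variable {V : Type*} [DecidableEq V] {G : SimpleGraph V} [DecidableRel G.Adj]
  {ε d : ℝ} {A B : Finset V}

lemma nonneg (h : IsRegularPair G ε d A B) : 0 ≤ d := h.1 ▸ density_nonneg G A B

lemma le_one (h : IsRegularPair G ε d A B) : d ≤ 1 := h.1 ▸ density_le_one G A B

lemma abs_edgeCount_sub_le_of_le_card (h : IsRegularPair G ε d A B) {X Y : Finset V}
    (hX : X ⊆ A) (hY : Y ⊆ B) (hXc : ε * #A ≤ #X) (hYc : ε * #B ≤ #Y) :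
    |(edgeCount G X Y : ℝ) - d * (#X * #Y)| ≤ ε * (#X * #Y) := by
  rw [← density_mul_card_mul_card, ← sub_mul, abs_mul,
    abs_of_nonneg (by positivity : (0 : ℝ) ≤ #X * #Y)]
  exact mul_le_mul_of_nonneg_right (h.2 X hX Y hY hXc hYc).le (by positivity)

/-- Below the size threshold of regularity, `|X| |Y|` itself is already at most `ε |A| |B|`. -/
lemma abs_edgeCount_sub_le (h : IsRegularPair G ε d A B) {X Y : Finset V}
    (hX : X ⊆ A) (hY : Y ⊆ B) :
    |(edgeCount G X Y : ℝ) - d * (#X * #Y)| ≤ ε * (#A * #B) := by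
  have hXA : (#X : ℝ) ≤ #A := by exact_mod_cast card_le_card hX
  have hYB : (#Y : ℝ) ≤ #B := by exact_mod_cast card_le_card hY
  by_cases hlarge : ε * #A ≤ #X ∧ ε * #B ≤ #Y
  · have hε : 0 ≤ ε := (abs_nonneg _).trans (h.2 X hX Y hY hlarge.1 hlarge.2).le
    calc _ ≤ ε * (#X * #Y) := h.abs_edgeCount_sub_le_of_le_card hX hY hlarge.1 hlarge.2
      _ ≤ ε * (#A * #B) := by gcongr
  refine (abs_edgeCount_sub_le_card_mul_card G h.nonneg h.le_one X Y).trans ?_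
  rcases not_and_or.mp hlarge with hXc | hYc
  · push Not at hXc
    calc (#X : ℝ) * #Y ≤ ε * #A * #B := mul_le_mul hXc.le hYB (by positivity) (by linarith)
      _ = _ := by ring
  · push Not at hYc
    calc (#X : ℝ) * #Y ≤ #A * (ε * #B) := mul_le_mul hXA hYc.le (by positivity) (by positivity)
      _ = _ := by ring

lemma abs_sum_edgeCount_sub_le (h : IsRegularPair G ε d A B) {Y Z : Finset V}
    (hY : Y ⊆ A) (hZ : Z ⊆ B) (X : Finset V) :
    |∑ x ∈ X, (edgeCount G (Y.filter (G.Adj x)) (Z.filter (G.Adj x)) : ℝ)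
      - d * ∑ x ∈ X, (#(Y.filter (G.Adj x)) : ℝ) * #(Z.filter (G.Adj x))|
      ≤ #X * (ε * (#A * #B)) := by
  rw [mul_sum, ← sum_sub_distrib]
  refine (abs_sum_le_sum_abs _ _).trans ?_
  rw [← nsmul_eq_mul]
  exact sum_le_card_nsmul _ _ _ fun x _ =>
    h.abs_edgeCount_sub_le ((filter_subset _ _).trans hY) ((filter_subset _ _).trans hZ)

lemma card_le_of_forall_degree_le (h : IsRegularPair G ε d A B) (hε : 0 < ε) {S Y : Finset V}
    (hS : S ⊆ A) (hY : Y ⊆ B) (hYc : ε * #B ≤ #Y) (hYne : Y.Nonempty)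
    (hdeg : ∀ x ∈ S, (#(Y.filter (G.Adj x)) : ℝ) ≤ (d - ε) * #Y) :
    (#S : ℝ) ≤ ε * #A := by
  by_contra! hSc
  have hSY : (0 : ℝ) < #S * #Y := by
    have : (0 : ℝ) < #S := (by positivity : (0 : ℝ) ≤ ε * #A).trans_lt hSc
    have : (0 : ℝ) < #Y := by exact_mod_cast hYne.card_pos
    positivity
  have hdens : density G S Y ≤ d - ε := by
    rw [← mul_le_mul_iff_left₀ hSY, density_mul_card_mul_card, cast_edgeCount]
    calc ∑ x ∈ S, (#(Y.filter (G.Adj x)) : ℝ) ≤ ∑ _x ∈ S, (d - ε) * #Y := sum_le_sum hdeg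
      _ = (d - ε) * (#S * #Y) := by rw [sum_const, nsmul_eq_mul]; ring
  linarith [(abs_lt.mp (h.2 S hS Y hY hSc.le hYc)).1]

lemma card_le_of_forall_le_degree (h : IsRegularPair G ε d A B) (hε : 0 < ε) {S Y : Finset V}
    (hS : S ⊆ A) (hY : Y ⊆ B) (hYc : ε * #B ≤ #Y) (hYne : Y.Nonempty)
    (hdeg : ∀ x ∈ S, (d + ε) * #Y ≤ (#(Y.filter (G.Adj x)) : ℝ)) :
    (#S : ℝ) ≤ ε * #A := by
  by_contra! hSc
  have hSY : (0 : ℝ) < #S * #Y := by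
    have : (0 : ℝ) < #S := (by positivity : (0 : ℝ) ≤ ε * #A).trans_lt hSc
    have : (0 : ℝ) < #Y := by exact_mod_cast hYne.card_pos
    positivity
  have hdens : d + ε ≤ density G S Y := by
    rw [← mul_le_mul_iff_left₀ hSY, density_mul_card_mul_card, cast_edgeCount]
    calc (d + ε) * (#S * #Y) = ∑ _x ∈ S, (d + ε) * #Y := by rw [sum_const, nsmul_eq_mul]; ring
      _ ≤ ∑ x ∈ S, (#(Y.filter (G.Adj x)) : ℝ) := sum_le_sum hdeg
  linarith [(abs_lt.mp (h.2 S hS Y hY hSc.le hYc)).2]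

lemma card_atypicalVertices_le (h : IsRegularPair G ε d A B) (hε : 0 < ε) {X Y : Finset V}
    (hX : X ⊆ A) (hY : Y ⊆ B) (hYc : ε * #B ≤ #Y) (hYne : Y.Nonempty) :
    (#(atypicalVertices G ε d X Y) : ℝ) ≤ 2 * ε * #A := by
  set low := X.filter fun x => (#(Y.filter (G.Adj x)) : ℝ) ≤ (d - ε) * #Y
  set high := X.filter fun x => (d + ε) * #Y ≤ (#(Y.filter (G.Adj x)) : ℝ)
  have hsub : atypicalVertices G ε d X Y ⊆ low ∪ high := by
    intro x hx
    simp only [atypicalVertices, low, high, mem_filter, mem_union, abs_lt, not_and_or,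
      not_lt] at hx ⊢
    rcases hx with ⟨hxX, hx | hx⟩
    · exact Or.inl ⟨hxX, by linarith⟩
    · exact Or.inr ⟨hxX, by linarith⟩
  have hcard : #(atypicalVertices G ε d X Y) ≤ #low + #high :=
    (card_le_card hsub).trans (card_union_le _ _)
  have hlow := h.card_le_of_forall_degree_le hε ((filter_subset _ _).trans hX) hY hYc hYne
    fun x hx => (mem_filter.mp hx).2
  have hhigh := h.card_le_of_forall_le_degree hε ((filter_subset _ _).trans hX) hY hYc hYne
    fun x hx => (mem_filter.mp hx).2
  have : (#(atypicalVertices G ε d X Y) : ℝ) ≤ #low + #high := by exact_mod_cast hcard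
  linarith

lemma abs_sum_degree_mul_degree_sub_le {d₁ d₂ : ℝ} {C : Finset V}
    (h₁ : IsRegularPair G ε d₁ A B) (h₂ : IsRegularPair G ε d₂ A C) (hε : 0 < ε)
    {X Y Z : Finset V} (hX : X ⊆ A) (hY : Y ⊆ B) (hZ : Z ⊆ C)
    (hYc : ε * #B ≤ #Y) (hZc : ε * #C ≤ #Z) (hYne : Y.Nonempty) (hZne : Z.Nonempty) :
    |∑ x ∈ X, (#(Y.filter (G.Adj x)) : ℝ) * #(Z.filter (G.Adj x)) - d₁ * d₂ * (#X * #Y * #Z)|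
      ≤ 2 * ε * (#X * #Y * #Z) + 4 * ε * (#A * #Y * #Z) := by
  set bad := atypicalVertices G ε d₁ X Y ∪ atypicalVertices G ε d₂ X Z
  set f := fun x => |(#(Y.filter (G.Adj x)) : ℝ) * #(Z.filter (G.Adj x)) - d₁ * d₂ * (#Y * #Z)|
  have hbadX : bad ⊆ X :=
    union_subset (atypicalVertices_subset G _ _ _ _) (atypicalVertices_subset G _ _ _ _)
  have hbad : (#bad : ℝ) ≤ 4 * ε * #A := by
    have : (#bad : ℝ) ≤ #(atypicalVertices G ε d₁ X Y) + #(atypicalVertices G ε d₂ X Z) := by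
      exact_mod_cast card_union_le _ _
    linarith [h₁.card_atypicalVertices_le hε hX hY hYc hYne,
      h₂.card_atypicalVertices_le hε hX hZ hZc hZne]
  have hgood : ∑ x ∈ X \ bad, f x ≤ #X * (2 * ε * (#Y * #Z)) := by
    refine (sum_le_card_nsmul _ _ (2 * ε * (#Y * #Z)) fun x hx => ?_).trans ?_
    · obtain ⟨hxX, hxbad⟩ := mem_sdiff.mp hx
      exact abs_degree_mul_degree_sub_le G h₁.nonneg h₁.le_one hxX
        (fun h => hxbad (mem_union_left _ h)) (fun h => hxbad (mem_union_right _ h))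
    · rw [nsmul_eq_mul]
      exact mul_le_mul_of_nonneg_right (by exact_mod_cast card_le_card sdiff_subset)
        (by positivity)
  have hrest : ∑ x ∈ bad, f x ≤ #bad * (#Y * #Z) := by
    rw [← nsmul_eq_mul]
    refine sum_le_card_nsmul _ _ _ fun x _ => abs_sub_le_of_nonneg_of_le (by positivity) ?_
      (mul_nonneg (mul_nonneg h₁.nonneg h₂.nonneg) (by positivity))
      (mul_le_of_le_one_left (by positivity) (mul_le_one₀ h₁.le_one h₂.nonneg h₂.le_one))
    exact mul_le_mul (by exact_mod_cast card_le_card (filter_subset _ _))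
      (by exact_mod_cast card_le_card (filter_subset _ _)) (by positivity) (by positivity)
  calc _ = |∑ x ∈ X, ((#(Y.filter (G.Adj x)) : ℝ) * #(Z.filter (G.Adj x))
          - d₁ * d₂ * (#Y * #Z))| := by
        rw [sum_sub_distrib, sum_const, nsmul_eq_mul]; ring_nf
    _ ≤ ∑ x ∈ X, f x := abs_sum_le_sum_abs _ _
    _ = ∑ x ∈ X \ bad, f x + ∑ x ∈ bad, f x := (sum_sdiff hbadX).symm
    _ ≤ #X * (2 * ε * (#Y * #Z)) + 4 * ε * #A * (#Y * #Z) := by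
        gcongr
        exact hrest.trans (by gcongr)
    _ = _ := by ring

lemma abs_card_triangles_sub_le {d₁₂ d₁₃ d₂₃ : ℝ} {C : Finset V}
    (h₁₂ : IsRegularPair G ε d₁₂ A B) (h₁₃ : IsRegularPair G ε d₁₃ A C)
    (h₂₃ : IsRegularPair G ε d₂₃ B C) (hε : 0 < ε)
    {X Y Z : Finset V} (hX : X ⊆ A) (hY : Y ⊆ B) (hZ : Z ⊆ C)
    (hYc : ε * #B ≤ #Y) (hZc : ε * #C ≤ #Z) (hYne : Y.Nonempty) (hZne : Z.Nonempty) :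
    |(#((X ×ˢ Y ×ˢ Z).filter
        (fun p => G.Adj p.1 p.2.1 ∧ G.Adj p.1 p.2.2 ∧ G.Adj p.2.1 p.2.2)) : ℝ)
      - d₁₂ * d₁₃ * d₂₃ * #X * #Y * #Z|
      ≤ #X * (ε * (#B * #C)) + (2 * ε * (#X * #Y * #Z) + 4 * ε * (#A * #Y * #Z)) := by
  have hedges := h₂₃.abs_sum_edgeCount_sub_le hY hZ X
  have hcodeg := h₁₂.abs_sum_degree_mul_degree_sub_le h₁₃ hε hX hY hZ hYc hZc hYne hZne
  rw [card_triangles_eq_sum_edgeCount]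
  push_cast
  set S := ∑ x ∈ X, (#(Y.filter (G.Adj x)) : ℝ) * #(Z.filter (G.Adj x))
  calc _ ≤ |_ - d₂₃ * S| + |d₂₃ * S - d₁₂ * d₁₃ * d₂₃ * #X * #Y * #Z| := abs_sub_le _ _ _
    _ = |_ - d₂₃ * S| + d₂₃ * |S - d₁₂ * d₁₃ * (#X * #Y * #Z)| := by
      rw [show d₂₃ * S - d₁₂ * d₁₃ * d₂₃ * #X * #Y * #Z
          = d₂₃ * (S - d₁₂ * d₁₃ * (#X * #Y * #Z)) by ring,
        abs_mul, abs_of_nonneg h₂₃.nonneg]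
    _ ≤ _ := add_le_add hedges ((mul_le_of_le_one_left (abs_nonneg _) h₂₃.le_one).trans hcodeg)

end IsRegularPair

theorem triangle_counting_lemma_general {V : Type*} [DecidableEq V]
    (G : SimpleGraph V) [DecidableRel G.Adj] {n : ℕ}
    {ε d12 d13 d23 : ℝ} (hε : 0 < ε)
    (V₁ V₂ V₃ : Finset V)
    (hc1 : V₁.card = n) (hc2 : V₂.card = n) (hc3 : V₃.card = n)
    (hreg12 : IsRegularPair G ε d12 V₁ V₂)
    (hreg13 : IsRegularPair G ε d13 V₁ V₃)
    (hreg23 : IsRegularPair G ε d23 V₂ V₃)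
    (X₁ X₂ X₃ : Finset V) (hs1 : X₁ ⊆ V₁) (hs2 : X₂ ⊆ V₂) (hs3 : X₃ ⊆ V₃)
    (hx2 : ε * (n : ℝ) ≤ (X₂.card : ℝ))
    (hx3 : ε * (n : ℝ) ≤ (X₃.card : ℝ)) :
    |(((X₁ ×ˢ X₂ ×ˢ X₃).filter
        (fun p => G.Adj p.1 p.2.1 ∧ G.Adj p.1 p.2.2 ∧ G.Adj p.2.1 p.2.2)).card : ℝ)
      - d12 * d13 * d23 * (X₁.card : ℝ) * (X₂.card : ℝ) * (X₃.card : ℝ)|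
      ≤ 10 * ε * (n : ℝ) ^ 3 := by
  obtain rfl | hn := n.eq_zero_or_pos
  · simp [subset_empty.mp (card_eq_zero.mp hc1 ▸ hs1)]
  have hεn : (0 : ℝ) < ε * n := by positivity
  have hX₂ : X₂.Nonempty := card_pos.mp (by exact_mod_cast hεn.trans_le hx2)
  have hX₃ : X₃.Nonempty := card_pos.mp (by exact_mod_cast hεn.trans_le hx3)
  have hX₁n : (#X₁ : ℝ) ≤ n := hc1 ▸ by exact_mod_cast card_le_card hs1
  have hX₂n : (#X₂ : ℝ) ≤ n := hc2 ▸ by exact_mod_cast card_le_card hs2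
  have hX₃n : (#X₃ : ℝ) ≤ n := hc3 ▸ by exact_mod_cast card_le_card hs3
  have hcount := hreg12.abs_card_triangles_sub_le hreg13 hreg23 hε hs1 hs2 hs3
    (hc2 ▸ hx2) (hc3 ▸ hx3) hX₂ hX₃
  rw [hc1, hc2, hc3] at hcount
  calc _ ≤ _ := hcount
    _ ≤ n * (ε * (n * n)) + (2 * ε * (n * n * n) + 4 * ε * (n * n * n)) := by gcongr
    _ ≤ 10 * ε * (n : ℝ) ^ 3 := by nlinarith [hεn]

/-- Triangle counting lemma in a tripartite graph with pairwise `ε`-regular parts. -/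
theorem triangle_counting_lemma {V : Type*} [DecidableEq V]
    (G : SimpleGraph V) [DecidableRel G.Adj] {n : ℕ}
    {ε d12 d13 d23 : ℝ} (hε : 0 < ε)
    (h12 : ε < d12) (h13 : ε < d13) (h23 : ε < d23)
    (hd12 : d12 ≤ 1) (hd13 : d13 ≤ 1) (hd23 : d23 ≤ 1)
    (V₁ V₂ V₃ : Finset V)
    (hdisj12 : Disjoint V₁ V₂) (hdisj13 : Disjoint V₁ V₃) (hdisj23 : Disjoint V₂ V₃)
    (hc1 : V₁.card = n) (hc2 : V₂.card = n) (hc3 : V₃.card = n)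
    (hreg12 : IsRegularPair G ε d12 V₁ V₂)
    (hreg13 : IsRegularPair G ε d13 V₁ V₃)
    (hreg23 : IsRegularPair G ε d23 V₂ V₃)
    (X₁ X₂ X₃ : Finset V) (hs1 : X₁ ⊆ V₁) (hs2 : X₂ ⊆ V₂) (hs3 : X₃ ⊆ V₃)
    (hx1 : ε * (n : ℝ) ≤ (X₁.card : ℝ)) (hx2 : ε * (n : ℝ) ≤ (X₂.card : ℝ))
    (hx3 : ε * (n : ℝ) ≤ (X₃.card : ℝ)) :
    |(((X₁ ×ˢ X₂ ×ˢ X₃).filter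
        (fun p => G.Adj p.1 p.2.1 ∧ G.Adj p.1 p.2.2 ∧ G.Adj p.2.1 p.2.2)).card : ℝ)
      - d12 * d13 * d23 * (X₁.card : ℝ) * (X₂.card : ℝ) * (X₃.card : ℝ)|
      ≤ 10 * ε * (n : ℝ) ^ 3 :=
  triangle_counting_lemma_general G hε V₁ V₂ V₃ hc1 hc2 hc3 hreg12 hreg13 hreg23 X₁ X₂ X₃ hs1 hs2
    hs3 hx2 hx3
end

section
/- For all β > 0 there is β' > 0 (one may take β' = β⁴/2000 for β < 1/10) such that the following holds for every finite nonempty set S and every random variable X with values in S. If h(X) ≥ log|S| - β', then, setting a = 1/|S| and J = {x ∈ S : (1-β)·a ≤ P[X=x] ≤ (1+β)·a}, one has |J| ≥ (1-β)|S| and P[X ∈ J] ≥ 1 - β. -/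
open Finset

/-- The distribution of a random variable `X` on a finite probability space with
weights `P`. -/
noncomputable def distOf {Ω S : Type*} [Fintype Ω] [DecidableEq S]
    (P : Ω → ℝ) (X : Ω → S) (x : S) : ℝ :=
  ∑ ω ∈ Finset.univ.filter (fun ω => X ω = x), P ω

/-- The Shannon entropy (natural logarithm) of a random variable `X`. -/
noncomputable def entropyOf {Ω S : Type*} [Fintype Ω] [Fintype S] [DecidableEq S]
    (P : Ω → ℝ) (X : Ω → S) : ℝ :=
  ∑ x : S, Real.negMulLog (distOf P X x)

/-!
The gap `log |S| - h(X)` is the Kullback–Leibler divergence of the law `p` of `X` from the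
uniform law, `∑ₓ klFun (|S| p(x)) / |S|` with `klFun t = t log t + 1 - t`. Since
`klFun t ≥ (√t - 1)²`, every `x` with `|S| p(x) ∉ [1 - γ, 1 + γ]` contributes at least
`γ² max (1/|S|, p(x)) / 16` to it. A divergence of at most `γ³/16` therefore leaves at most
`γ |S|` such points, carrying total mass at most `γ`; take `γ = min β 1`.
-/

open Real InformationTheory

lemma sq_sqrt_sub_one_le_klFun {t : ℝ} (ht : 0 ≤ t) : (√t - 1) ^ 2 ≤ klFun t := by
  rcases ht.eq_or_lt with rfl | ht
  · simp [klFun_zero]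
  have hs : 0 < √t := sqrt_pos.2 ht
  have hlog : 2 * (1 - (√t)⁻¹) ≤ log t := by
    have := one_sub_inv_le_log_of_pos hs
    rw [log_sqrt ht.le] at this
    linarith
  have hsq : √t * √t = t := mul_self_sqrt ht.le
  have hmul : t * (2 * (1 - (√t)⁻¹)) = 2 * t - 2 * √t := by
    field_simp
    nlinarith
  rw [klFun_apply]
  nlinarith [mul_le_mul_of_nonneg_left hlog ht.le]

lemma mul_max_one_le_klFun {γ t : ℝ} (hγ₀ : 0 ≤ γ) (hγ₁ : γ ≤ 1) (ht : 0 ≤ t)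
    (h : γ ≤ |t - 1|) : γ ^ 2 / 16 * max 1 t ≤ klFun t := by
  refine le_trans ?_ (sq_sqrt_sub_one_le_klFun ht)
  rcases le_abs'.1 h with h | h
  · have hs : √t ≤ 1 - γ / 2 := sqrt_le_iff.2 ⟨by linarith, by nlinarith⟩
    rw [max_eq_left (by linarith)]
    nlinarith [sqrt_nonneg t]
  · have hs : 1 + γ / 3 ≤ √t := (le_sqrt (by positivity) (by linarith)).2 (by nlinarith)
    have hlin : γ / 4 * √t ≤ √t - 1 := by nlinarith
    have hsq : (γ / 4 * √t) ^ 2 = γ ^ 2 / 16 * t := by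
      rw [mul_pow, sq_sqrt (by linarith)]
      ring
    rw [max_eq_right (by linarith), ← hsq]
    exact pow_le_pow_left₀ (by positivity) hlin 2

lemma klFun_mul_div {n : ℝ} (hn : n ≠ 0) (q : ℝ) :
    klFun (n * q) / n = q * log n - negMulLog q + (n⁻¹ - q) := by
  rcases eq_or_ne q 0 with rfl | hq
  · simp [klFun_zero]
  rw [klFun_apply, log_mul hn hq, negMulLog]
  field_simp
  ring

lemma sum_klFun_card_mul_div_card {S : Type*} [Fintype S] [Nonempty S] {p : S → ℝ}
    (hp : ∑ x, p x = 1) :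
    ∑ x, klFun (Fintype.card S * p x) / Fintype.card S =
      log (Fintype.card S) - ∑ x, negMulLog (p x) := by
  have hn : (Fintype.card S : ℝ) ≠ 0 := by positivity
  simp_rw [klFun_mul_div hn, sum_add_distrib, sum_sub_distrib, ← sum_mul, hp, sum_const,
    card_univ, nsmul_eq_mul, mul_inv_cancel₀ hn]
  ring

noncomputable def nearUniformSet {S : Type*} [Fintype S] (β : ℝ) (p : S → ℝ) : Finset S :=
  univ.filter fun x => (1 - β) * (1 / (Fintype.card S : ℝ)) ≤ p x ∧
    p x ≤ (1 + β) * (1 / (Fintype.card S : ℝ))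

lemma sum_max_one_div_card_le_of_entropy_ge {S : Type*} [Fintype S] [Nonempty S] {γ : ℝ}
    (hγ₀ : 0 < γ) (hγ₁ : γ ≤ 1) {p : S → ℝ} (hp₀ : ∀ x, 0 ≤ p x) (hp₁ : ∑ x, p x = 1)
    (hent : log (Fintype.card S) - γ ^ 3 / 16 ≤ ∑ x, negMulLog (p x)) (B : Finset S)
    (hfar : ∀ x ∈ B, γ ≤ |Fintype.card S * p x - 1|) :
    ∑ x ∈ B, max 1 (Fintype.card S * p x) / Fintype.card S ≤ γ := by
  set n : ℝ := (Fintype.card S : ℝ)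
  have hn : 0 < n := by positivity
  have hnp : ∀ x, 0 ≤ n * p x := fun x => mul_nonneg hn.le (hp₀ x)
  refine le_of_mul_le_mul_left ?_ (by positivity : 0 < γ ^ 2 / 16)
  calc γ ^ 2 / 16 * ∑ x ∈ B, max 1 (n * p x) / n
      ≤ ∑ x ∈ B, klFun (n * p x) / n := by
        rw [mul_sum]
        refine sum_le_sum fun x hx => ?_
        rw [← mul_div_assoc]
        gcongr
        exact mul_max_one_le_klFun hγ₀.le hγ₁ (hnp x) (hfar x hx)
    _ ≤ ∑ x, klFun (n * p x) / n :=
        sum_le_sum_of_subset_of_nonneg (subset_univ _) fun x _ _ =>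
          div_nonneg (klFun_nonneg (hnp x)) hn.le
    _ = log n - ∑ x, negMulLog (p x) := sum_klFun_card_mul_div_card hp₁
    _ ≤ γ ^ 2 / 16 * γ := by linarith

theorem nearUniformSet_large_of_entropy_ge {S : Type*} [Fintype S] [DecidableEq S]
    [Nonempty S] {β γ : ℝ} (hγ₀ : 0 < γ) (hγ₁ : γ ≤ 1) (hγβ : γ ≤ β) {p : S → ℝ}
    (hp₀ : ∀ x, 0 ≤ p x) (hp₁ : ∑ x, p x = 1)
    (hent : log (Fintype.card S) - γ ^ 3 / 16 ≤ ∑ x, negMulLog (p x)) :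
    (1 - β) * (Fintype.card S : ℝ) ≤ (nearUniformSet β p).card ∧
      1 - β ≤ ∑ x ∈ nearUniformSet β p, p x := by
  set n : ℝ := (Fintype.card S : ℝ)
  have hn : 0 < n := by positivity
  set B := (nearUniformSet β p)ᶜ
  have hfar : ∀ x ∈ B, γ ≤ |n * p x - 1| := by
    intro x hx
    simp only [B, nearUniformSet, mem_compl, mem_filter, mem_univ, true_and, not_and_or,
      not_le] at hx
    refine le_abs'.2 (hx.imp (fun h => ?_) fun h => ?_) <;>
    · have := mul_lt_mul_of_pos_left h hn
      field_simp at this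
      linarith
  have hweight := sum_max_one_div_card_le_of_entropy_ge hγ₀ hγ₁ hp₀ hp₁ hent B hfar
  have hcard : (B.card : ℝ) ≤ γ * n := by
    have : ∑ x ∈ B, 1 / n ≤ ∑ x ∈ B, max 1 (n * p x) / n :=
      sum_le_sum fun x _ => div_le_div_of_nonneg_right (le_max_left _ _) hn.le
    rw [sum_const, nsmul_eq_mul, mul_one_div] at this
    rw [← div_le_iff₀ hn]
    linarith
  have hmass : ∑ x ∈ B, p x ≤ γ := by
    refine le_trans (sum_le_sum fun x _ => ?_) hweight
    rw [le_div_iff₀ hn, mul_comm]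
    exact le_max_right _ _
  constructor
  · have : (B.card : ℝ) + (nearUniformSet β p).card = n := by
      rw [← Nat.cast_add, card_compl_add_card]
    nlinarith
  · have := sum_compl_add_sum (nearUniformSet β p) p
    rw [hp₁] at this
    linarith

lemma distOf_nonneg {Ω S : Type*} [Fintype Ω] [DecidableEq S] {P : Ω → ℝ}
    (hP : ∀ ω, 0 ≤ P ω) (X : Ω → S) (x : S) : 0 ≤ distOf P X x :=
  sum_nonneg fun ω _ => hP ω

lemma sum_distOf {Ω S : Type*} [Fintype Ω] [Fintype S] [DecidableEq S] (P : Ω → ℝ)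
    (X : Ω → S) : ∑ x, distOf P X x = ∑ ω, P ω :=
  sum_fiberwise_of_maps_to (fun ω _ => mem_univ (X ω)) P

/-- Stability for maximal entropy: if the entropy of `X` is within `β'` of
`log |S|`, then the distribution of `X` is within a factor `1 ± β` of uniform on
all but a `β`-fraction of `S`, and the exceptional values carry probability at
most `β`. -/
theorem almost_maximal_entropy {β : ℝ} (hβ : 0 < β) :
    ∃ β' : ℝ, 0 < β' ∧
      ∀ (Ω S : Type) [Fintype Ω] [Fintype S] [DecidableEq S], Nonempty S →
        ∀ (P : Ω → ℝ), (∀ ω, 0 ≤ P ω) → (∑ ω, P ω = 1) →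
        ∀ X : Ω → S,
          Real.log (Fintype.card S) - β' ≤ entropyOf P X →
          ((1 - β) * (Fintype.card S : ℝ) ≤
              ((Finset.univ.filter (fun x : S =>
                (1 - β) * (1 / (Fintype.card S : ℝ)) ≤ distOf P X x ∧
                  distOf P X x ≤ (1 + β) * (1 / (Fintype.card S : ℝ)))).card : ℝ)) ∧
          (1 - β ≤ ∑ x ∈ Finset.univ.filter (fun x : S =>
              (1 - β) * (1 / (Fintype.card S : ℝ)) ≤ distOf P X x ∧
                distOf P X x ≤ (1 + β) * (1 / (Fintype.card S : ℝ))),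
              distOf P X x) := by
  have hγ : 0 < min β 1 := lt_min hβ one_pos
  refine ⟨min β 1 ^ 3 / 16, by positivity, fun Ω S _ _ _ _ P hP₀ hP₁ X hent => ?_⟩
  exact nearUniformSet_large_of_entropy_ge hγ (min_le_right _ _) (min_le_left _ _)
    (distOf_nonneg hP₀ X) (by rw [sum_distOf, hP₁]) hent
end

section
/- For n ∈ ℕ divisible by k ≥ 2, let G be the complete n-vertex graph with all edges inside a fixed set I of size n/k + 1 removed (so I is an independent set and every vertex of I is adjacent to all vertices outside I). Then δ(G) = (k-1)/k·n - 1 and G has no fractional K_k-factor. -/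
/-!
Summing the constraints of a fractional `K_k`-factor `ω` over all vertices counts every clique
`k` times, so the total weight is `n / k`. Summing them over an independent set `I` counts every
clique at most once, so the total weight is at least `|I|`. Hence `k |I| ≤ n`, which fails for
`|I| = n / k + 1`.
-/

open Finset

theorem Finset.sum_sum_filter_mem_eq_sum_card_inter_mul {V R : Type*} [DecidableEq V]
    [CommSemiring R] (C : Finset (Finset V)) (A : Finset V) (ω : Finset V → R) :
    ∑ u ∈ A, ∑ s ∈ C with u ∈ s, ω s = ∑ s ∈ C, #(s ∩ A) * ω s := by
  simp_rw [sum_filter]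
  rw [sum_comm]
  refine sum_congr rfl fun s _ => ?_
  rw [← sum_filter, sum_const, filter_mem_eq_inter, inter_comm, nsmul_eq_mul]

namespace SimpleGraph

theorem IsClique.card_inter_le_one_of_isIndepSet {V : Type*} [DecidableEq V]
    {G : SimpleGraph V} {s I : Finset V}
    (hs : G.IsClique (s : Set V)) (hI : G.IsIndepSet (I : Set V)) : #(s ∩ I) ≤ 1 := by
  refine card_le_one.2 fun a ha b hb => by_contra fun hab => ?_
  rw [mem_inter] at ha hb
  exact hI ha.2 hb.2 hab (hs ha.1 hb.1 hab)

theorem isIndepSet_of_adj_iff {V : Type*} {G : SimpleGraph V} {I : Set V}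
    (hadj : ∀ u v : V, G.Adj u v ↔ u ≠ v ∧ ¬(u ∈ I ∧ v ∈ I)) : G.IsIndepSet I :=
  fun u hu v hv _ huv => ((hadj u v).1 huv).2 ⟨hu, hv⟩

variable {V : Type*} [Fintype V] [DecidableEq V]

def IsFractionalCliqueFactor (G : SimpleGraph V) [DecidableRel G.Adj] (k : ℕ)
    (ω : Finset V → ℝ) : Prop :=
  (∀ s, 0 ≤ ω s) ∧ ∀ u : V, ∑ s ∈ (G.cliqueFinset k).filter (fun s => u ∈ s), ω s = 1

namespace IsFractionalCliqueFactor

variable {G : SimpleGraph V} [DecidableRel G.Adj] {k : ℕ} {ω : Finset V → ℝ}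

theorem mul_sum_eq_card (hω : G.IsFractionalCliqueFactor k ω) :
    k * ∑ s ∈ G.cliqueFinset k, ω s = Fintype.card V := by
  have hsum := sum_sum_filter_mem_eq_sum_card_inter_mul (G.cliqueFinset k) univ ω
  simp only [hω.2, sum_const, card_univ, nsmul_eq_mul, mul_one, inter_univ] at hsum
  rw [hsum, mul_sum]
  refine sum_congr rfl fun s hs => ?_
  rw [(mem_cliqueFinset_iff.1 hs).2]

theorem card_le_sum_of_isIndepSet (hω : G.IsFractionalCliqueFactor k ω) {I : Finset V}
    (hI : G.IsIndepSet (I : Set V)) : (#I : ℝ) ≤ ∑ s ∈ G.cliqueFinset k, ω s := by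
  have hsum := sum_sum_filter_mem_eq_sum_card_inter_mul (G.cliqueFinset k) I ω
  simp only [hω.2, sum_const, nsmul_eq_mul, mul_one] at hsum
  rw [hsum]
  refine sum_le_sum fun s hs => mul_le_of_le_one_left (hω.1 s) ?_
  exact_mod_cast (mem_cliqueFinset_iff.1 hs).1.card_inter_le_one_of_isIndepSet hI

theorem mul_card_le_card_of_isIndepSet (hω : G.IsFractionalCliqueFactor k ω) {I : Finset V}
    (hI : G.IsIndepSet (I : Set V)) : k * #I ≤ Fintype.card V := by
  have hbound := mul_le_mul_of_nonneg_left (hω.card_le_sum_of_isIndepSet hI) k.cast_nonneg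
  rw [hω.mul_sum_eq_card] at hbound
  exact_mod_cast hbound

end IsFractionalCliqueFactor

section CompleteGraphMinusClique

variable {G : SimpleGraph V} [DecidableRel G.Adj] {I : Finset V}
  (hadj : ∀ u v : V, G.Adj u v ↔ u ≠ v ∧ ¬(u ∈ I ∧ v ∈ I))
include hadj

theorem neighborFinset_of_adj_iff_of_mem {v : V} (hv : v ∈ I) : G.neighborFinset v = Iᶜ := by
  ext u
  simp only [mem_neighborFinset, hadj, mem_compl]
  exact ⟨fun h hu => h.2 ⟨hv, hu⟩, fun hu => ⟨fun h => hu (h ▸ hv), fun h => hu h.2⟩⟩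

theorem neighborFinset_of_adj_iff_of_notMem {v : V} (hv : v ∉ I) :
    G.neighborFinset v = {v}ᶜ := by
  ext u
  simp only [mem_neighborFinset, hadj, mem_compl, mem_singleton]
  exact ⟨fun h hu => h.1 hu.symm, fun hu => ⟨fun h => hu h.symm, fun h => hv h.1⟩⟩

theorem minDegree_of_adj_iff (hI : I.Nonempty) : G.minDegree = Fintype.card V - #I := by
  obtain ⟨v, hv⟩ := hI
  have hdeg_mem : ∀ {u}, u ∈ I → G.degree u = Fintype.card V - #I := fun hu => by
    rw [← card_neighborFinset_eq_degree, neighborFinset_of_adj_iff_of_mem hadj hu, card_compl]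
  have : Nonempty V := ⟨v⟩
  refine le_antisymm (hdeg_mem hv ▸ G.minDegree_le_degree v) ?_
  refine G.le_minDegree_of_forall_le_degree _ fun u => ?_
  by_cases hu : u ∈ I
  · exact (hdeg_mem hu).ge
  · rw [← card_neighborFinset_eq_degree, neighborFinset_of_adj_iff_of_notMem hadj hu,
      card_compl, card_singleton]
    exact Nat.sub_le_sub_left (card_pos.2 ⟨v, hv⟩) _

end CompleteGraphMinusClique

end SimpleGraph

open SimpleGraph in
/-- The extremal example for fractional `K_k`-factors: the complete `n`-vertex
graph with all edges inside a fixed set `I` of size `n/k + 1` removed has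
minimum degree `(k-1)/k·n - 1 = n - n/k - 1` and no fractional `K_k`-factor. -/
theorem extremal_graph_no_fractional_factor
    {V : Type*} [Fintype V] [DecidableEq V] {n k : ℕ} (hk : 2 ≤ k) (hdvd : k ∣ n)
    (hcard : Fintype.card V = n)
    (I : Finset V) (hI : I.card = n / k + 1)
    (G : SimpleGraph V) [DecidableRel G.Adj]
    (hadj : ∀ u v : V, G.Adj u v ↔ u ≠ v ∧ ¬(u ∈ I ∧ v ∈ I)) :
    G.minDegree = n - n / k - 1 ∧
    ¬ ∃ ω : Finset V → ℝ, (∀ s, 0 ≤ ω s) ∧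
        ∀ u : V, ∑ s ∈ (G.cliqueFinset k).filter (fun s => u ∈ s), ω s = 1 := by
  refine ⟨?_, fun ⟨ω, hω⟩ => ?_⟩
  · have hIne : I.Nonempty := card_pos.1 (hI ▸ Nat.succ_pos _)
    rw [minDegree_of_adj_iff hadj hIne, hcard, hI, Nat.sub_sub]
  · have hbound := IsFractionalCliqueFactor.mul_card_le_card_of_isIndepSet hω
      (isIndepSet_of_adj_iff hadj)
    rw [hI, hcard, mul_add, mul_one, Nat.mul_div_cancel' hdvd] at hbound
    omega
end

section
/- Let m ≥ 1 and n = 3m ∈ 3ℕ. Let G be the graph on vertex set X ∪ Y ∪ Z with |X| = m+2, |Y| = |Z| = m-1, containing all edges between distinct parts (complete tripartite) together with the edges of a cycle C of length m+2 on X. Then every triangle factor of G contains at least 2 edges of C. Consequently G contains at most ⌊(m+2)/2⌋ pairwise edge-disjoint triangle factors. -/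
open Finset

/-!
Index the edges of `C` by `i : Fin (m + 2)`, edge `i` being `{i, i + 1}`. In a clique of `C` at
most one vertex misses its successor, so a triangle with `k` vertices in `X` contains at least
`k - 1` edges of `C`. Summing over the `m` triangles of a factor, which together meet `X` in
`m + 2` vertices, the factor contains at least `2` edges of `C`. Edge-disjoint factors contain
disjoint sets of edges of `C`, of which there are `m + 2`.
-/

/-- Vertex set of the construction: a part `X` of size `m+2` and parts `Y`, `Z`
of size `m-1` each. -/
abbrev TriVert (m : ℕ) := Fin (m + 2) ⊕ (Fin (m - 1) ⊕ Fin (m - 1))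

/-- The part (0 for `X`, 1 for `Y`, 2 for `Z`) of a vertex. -/
def part3 {m : ℕ} : TriVert m → Fin 3 :=
  Sum.elim (fun _ => 0) (Sum.elim (fun _ => 1) (fun _ => 2))

/-- Adjacency along the cycle `C` of length `m+2` on `Fin (m+2)`. -/
def cycAdj {m : ℕ} (i j : Fin (m + 2)) : Prop := i ≠ j ∧ (j = i + 1 ∨ i = j + 1)

/-- `F` is a triangle factor of `G`: a set of pairwise vertex-disjoint triangles
covering all vertices. -/
def IsTriangleFactor {V : Type*} [Fintype V] [DecidableEq V] (G : SimpleGraph V)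
    (F : Finset (Finset V)) : Prop :=
  (∀ s ∈ F, G.IsNClique 3 s) ∧ (∀ s ∈ F, ∀ t ∈ F, s ≠ t → Disjoint s t) ∧
    F.biUnion id = Finset.univ

lemma card_le_card_filter_succ_mem_add_one {m : ℕ} {T : Finset (Fin (m + 2))}
    (hT : (T : Set (Fin (m + 2))).Pairwise cycAdj) : #T ≤ #{i ∈ T | i + 1 ∈ T} + 1 := by
  rw [← card_filter_add_card_filter_not (· + 1 ∈ T)]
  gcongr
  refine card_le_one.2 fun a ha b hb => by_contra fun hab => ?_
  simp only [mem_filter] at ha hb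
  rcases (hT ha.1 hb.1 hab).2 with rfl | rfl
  · exact ha.2 hb.1
  · exact hb.2 ha.1

lemma pair_inl_succ_ne {m : ℕ} (hm : 1 ≤ m) {i j : Fin (m + 2)} (hij : i ≠ j) :
    ({Sum.inl i, Sum.inl (i + 1)} : Finset (TriVert m)) ≠ {Sum.inl j, Sum.inl (j + 1)} := by
  intro h
  have hi : (Sum.inl i : TriVert m) ∈ ({Sum.inl j, Sum.inl (j + 1)} : Finset _) := h ▸ by simp
  have hi' : (Sum.inl (i + 1) : TriVert m) ∈ ({Sum.inl j, Sum.inl (j + 1)} : Finset _) :=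
    h ▸ by simp
  simp only [mem_insert, mem_singleton, Sum.inl.injEq] at hi hi'
  rcases hi with rfl | rfl
  · exact hij rfl
  rcases hi' with h2 | h2
  · rw [add_assoc, add_eq_left, Fin.ext_iff, Fin.val_add, Fin.val_one,
      Nat.mod_eq_of_lt (by omega)] at h2
    simp at h2
  · exact hij (add_right_cancel h2)

namespace IsTriangleFactor

variable {V : Type*} [Fintype V] [DecidableEq V] {G : SimpleGraph V} {F : Finset (Finset V)}

lemma three_mul_card (hF : IsTriangleFactor G F) : 3 * #F = Fintype.card V := by
  rw [← card_univ, ← hF.2.2, card_biUnion (t := id) hF.2.1, mul_comm, ← smul_eq_mul, ← sum_const]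
  exact sum_congr rfl fun s hs => (hF.1 s hs).2.symm

lemma sum_card_toLeft {α β : Type*} [Fintype α] [Fintype β] [DecidableEq α] [DecidableEq β]
    {G : SimpleGraph (α ⊕ β)} {F : Finset (Finset (α ⊕ β))} (hF : IsTriangleFactor G F) :
    ∑ s ∈ F, #s.toLeft = Fintype.card α := by
  rw [← card_biUnion fun s hs t ht hst => ?_, ← card_univ]
  · congr 1
    refine eq_univ_of_forall fun a => ?_
    obtain ⟨s, hs, has⟩ := mem_biUnion.1 (hF.2.2 ▸ mem_univ (Sum.inl a))
    exact mem_biUnion.2 ⟨s, hs, mem_toLeft.2 has⟩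
  · exact disjoint_left.2 fun a has hat =>
      disjoint_left.1 (hF.2.1 s hs t ht hst) (mem_toLeft.1 has) (mem_toLeft.1 hat)

end IsTriangleFactor

section CycleEdges

variable {m : ℕ}

def cycleEdgesIn (s : Finset (TriVert m)) : Finset (Fin (m + 2)) :=
  {i | Sum.inl i ∈ s ∧ Sum.inl (i + 1) ∈ s}

def coveredCycleEdges (F : Finset (Finset (TriVert m))) : Finset (Fin (m + 2)) :=
  F.biUnion cycleEdgesIn

lemma mem_coveredCycleEdges {F : Finset (Finset (TriVert m))} {i : Fin (m + 2)} :
    i ∈ coveredCycleEdges F ↔ ∃ s ∈ F, Sum.inl i ∈ s ∧ Sum.inl (i + 1) ∈ s := by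
  simp [coveredCycleEdges, cycleEdgesIn]

variable {G : SimpleGraph (TriVert m)}
  (hX : ∀ i j : Fin (m + 2), G.Adj (Sum.inl i) (Sum.inl j) → cycAdj i j)
include hX

lemma card_toLeft_le_card_cycleEdgesIn_add_one {s : Finset (TriVert m)} (hs : G.IsClique s) :
    #s.toLeft ≤ #(cycleEdgesIn s) + 1 := by
  have hT : (s.toLeft : Set (Fin (m + 2))).Pairwise cycAdj := fun i hi j hj hij =>
    hX i j (hs (mem_toLeft.1 hi) (mem_toLeft.1 hj) (Sum.inl_injective.ne hij))
  convert card_le_card_filter_succ_mem_add_one hT using 3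
  ext i
  simp [cycleEdgesIn]

lemma two_le_card_coveredCycleEdges (hm : 1 ≤ m) {F : Finset (Finset (TriVert m))}
    (hF : IsTriangleFactor G F) : 2 ≤ #(coveredCycleEdges F) := by
  have hFcard : #F = m := by
    have := hF.three_mul_card
    simp only [TriVert, Fintype.card_sum, Fintype.card_fin] at this
    omega
  have hdisj : (F : Set (Finset (TriVert m))).PairwiseDisjoint cycleEdgesIn :=
    fun s hs t ht hst => by
      simpa [cycleEdgesIn, disjoint_left] using
        fun i hi _ hit _ => disjoint_left.1 (hF.2.1 s hs t ht hst) hi hit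
  have := calc
    m + 2 = ∑ s ∈ F, #s.toLeft := by rw [hF.sum_card_toLeft, Fintype.card_fin]
    _ ≤ ∑ s ∈ F, (#(cycleEdgesIn s) + 1) :=
      sum_le_sum fun s hs => card_toLeft_le_card_cycleEdgesIn_add_one hX (hF.1 s hs).1
    _ = #(coveredCycleEdges F) + m := by
      rw [sum_add_distrib, coveredCycleEdges, card_biUnion hdisj, sum_const, hFcard,
        smul_eq_mul, mul_one]
  omega

end CycleEdges

lemma card_nsmul_le_card_of_pairwiseDisjoint {ι α : Type*} [Fintype α] [DecidableEq α]
    {𝒻 : Finset ι} {E : ι → Finset α} (hE : (𝒻 : Set ι).PairwiseDisjoint E) {k : ℕ}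
    (hk : ∀ F ∈ 𝒻, k ≤ #(E F)) : #𝒻 • k ≤ Fintype.card α :=
  calc #𝒻 • k ≤ ∑ F ∈ 𝒻, #(E F) := card_nsmul_le_sum _ _ _ hk
    _ = #(𝒻.biUnion E) := (card_biUnion hE).symm
    _ ≤ Fintype.card α := card_le_univ _

/-- In the complete tripartite graph with parts of sizes `m+2, m-1, m-1` plus a
cycle `C` of length `m+2` on the large part, every triangle factor uses at least
two edges of `C`; consequently there are at most `⌊(m+2)/2⌋` pairwise
edge-disjoint triangle factors. -/
theorem tripartite_plus_cycle_construction (m : ℕ) (hm : 1 ≤ m)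
    (G : SimpleGraph (TriVert m))
    (hadj : ∀ u v : TriVert m, G.Adj u v ↔
      (part3 u ≠ part3 v ∨
        ∃ i j : Fin (m + 2), u = Sum.inl i ∧ v = Sum.inl j ∧ cycAdj i j)) :
    (∀ F : Finset (Finset (TriVert m)), IsTriangleFactor G F →
      ∃ i j : Fin (m + 2),
        ({Sum.inl i, Sum.inl (i + 1)} : Finset (TriVert m)) ≠
          ({Sum.inl j, Sum.inl (j + 1)} : Finset (TriVert m)) ∧
        (∃ s ∈ F, Sum.inl i ∈ s ∧ Sum.inl (i + 1) ∈ s) ∧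
        (∃ s ∈ F, Sum.inl j ∈ s ∧ Sum.inl (j + 1) ∈ s)) ∧
    (∀ 𝒻 : Finset (Finset (Finset (TriVert m))),
      (∀ F ∈ 𝒻, IsTriangleFactor G F) →
      (∀ F₁ ∈ 𝒻, ∀ F₂ ∈ 𝒻, F₁ ≠ F₂ →
        ∀ u v : TriVert m, u ≠ v →
          (∃ s ∈ F₁, u ∈ s ∧ v ∈ s) → ¬ ∃ s ∈ F₂, u ∈ s ∧ v ∈ s) →
      𝒻.card ≤ (m + 2) / 2) := by
  have hX (i j : Fin (m + 2)) (h : G.Adj (Sum.inl i) (Sum.inl j)) : cycAdj i j := by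
    simpa [hadj, part3] using h
  refine ⟨fun F hF => ?_, fun 𝒻 h𝒻 hdisj => ?_⟩
  · obtain ⟨i, hi, j, hj, hij⟩ := one_lt_card.1 (two_le_card_coveredCycleEdges hX hm hF)
    exact ⟨i, j, pair_inl_succ_ne hm hij, mem_coveredCycleEdges.1 hi,
      mem_coveredCycleEdges.1 hj⟩
  · have hE : (𝒻 : Set _).PairwiseDisjoint coveredCycleEdges := fun F₁ h₁ F₂ h₂ hne =>
      disjoint_left.2 fun i hi₁ hi₂ =>
        hdisj F₁ h₁ F₂ h₂ hne _ _ (by simp)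
          (mem_coveredCycleEdges.1 hi₁) (mem_coveredCycleEdges.1 hi₂)
    have := card_nsmul_le_card_of_pairwiseDisjoint hE fun F hF =>
      two_le_card_coveredCycleEdges hX hm (h𝒻 F hF)
    rw [Fintype.card_fin, smul_eq_mul] at this
    omega
end
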